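/- arXiv:2508.09336 — 2 statements merged into one kernel-verified Lean document; each statement's English description precedes it below -/
import Mathlib

section
/- Let G be a finite simple graph with connected components G_1,…,G_k, where G_1,…,G_i (i ≥ 0) are isolated vertices and G_{i+1},…,G_k are components with at least two vertices each. Then cdim(G) = max{i−1, 0} + Σ_{j=i+1}^{k} cdim(G_j). -/
open SimpleGraph

namespace ConnDim

open Classical in
/-- The local connectivity `κ(a,b)`: the maximum number of internally vertex-disjoint
`a`-`b` paths, with `κ(a,a) = ∞`. -/
noncomputable def localConn {V : Type*} (G : SimpleGraph V) (a b : V) : ℕ∞ :=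
  if a = b then ⊤
  else sSup {n : ℕ∞ | ∃ Ps : Finset (G.Path a b),
    (∀ p ∈ Ps, ∀ q ∈ Ps, p ≠ q → ∀ x : V,
        x ∈ p.1.support → x ∈ q.1.support → x = a ∨ x = b) ∧
    (Ps.card : ℕ∞) = n}

/-- A set `W` is connectivity resolving if vertices are determined by their
local connectivities to the elements of `W`. -/
def ConnResolving {V : Type*} (G : SimpleGraph V) (W : Set V) : Prop :=
  ∀ u v : V, (∀ w ∈ W, localConn G u w = localConn G v w) → u = v

/-- The connectivity dimension: minimum cardinality of a connectivity resolving set. -/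
noncomputable def cdim {V : Type*} (G : SimpleGraph V) : ℕ :=
  sInf {n : ℕ | ∃ W : Set V, ConnResolving G W ∧ W.ncard = n}

/-- A set `W` is metric resolving if vertices are determined by their distances
to the elements of `W`. -/
def MetricResolving {V : Type*} (G : SimpleGraph V) (W : Set V) : Prop :=
  ∀ u v : V, (∀ w ∈ W, G.dist u w = G.dist v w) → u = v

/-- The metric dimension: minimum cardinality of a metric resolving set. -/
noncomputable def mdim {V : Type*} (G : SimpleGraph V) : ℕ :=
  sInf {n : ℕ | ∃ W : Set V, MetricResolving G W ∧ W.ncard = n}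

/-- `G` forces a `𝟙` representation if every minimum resolving set (basis) `B` admits a
vertex whose local connectivity to every element of `B` equals `1`. -/
def ForcesOne {V : Type*} (G : SimpleGraph V) : Prop :=
  ∀ B : Set V, ConnResolving G B → B.ncard = cdim G →
    ∃ v : V, ∀ b ∈ B, localConn G v b = 1

/-- A cut vertex of a connected graph: its removal disconnects the graph. -/
def IsCutVertex {V : Type*} (G : SimpleGraph V) (v : V) : Prop :=
  G.Connected ∧ ¬ (G.induce {u : V | u ≠ v}).Connected

/-- A block of `G`: a maximal connected subgraph of `G` without a cut vertex of itself. -/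
def IsBlock {V : Type*} (G : SimpleGraph V) (H : G.Subgraph) : Prop :=
  H.coe.Connected ∧ (∀ v, ¬ IsCutVertex H.coe v) ∧
  ∀ H' : G.Subgraph, H ≤ H' → H'.coe.Connected → (∀ v, ¬ IsCutVertex H'.coe v) → H' = H

/-- The number of blocks of `G`. -/
noncomputable def numBlocks {V : Type*} (G : SimpleGraph V) : ℕ :=
  Nat.card {H : G.Subgraph // IsBlock G H}

/-- Two vertices are twins if they have the same neighborhood in the graph with
both of them deleted. -/
def AreTwins {V : Type*} (G : SimpleGraph V) (a b : V) : Prop :=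
  ∀ x : V, x ≠ a → x ≠ b → (G.Adj a x ↔ G.Adj b x)

/-- The threshold graph generated by a binary sequence `L` (`false` = isolated vertex,
`true` = dominating vertex): two vertices are adjacent iff the later one was added
as a dominating vertex. -/
def thresholdGraph (L : List Bool) : SimpleGraph (Fin L.length) :=
  SimpleGraph.fromRel (fun i j => i < j ∧ L.get j = true)

/-- The alternating binary sequence `0,1,0,1,…,0,1` of length `2 * n`. -/
def altList (n : ℕ) : List Bool := (List.replicate n [false, true]).flatten

/-- The join of two graphs on disjoint vertex sets by the bridge `v₁v₂`. -/
def bridgeJoin {V₁ V₂ : Type*} (G₁ : SimpleGraph V₁) (G₂ : SimpleGraph V₂)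
    (v₁ : V₁) (v₂ : V₂) : SimpleGraph (V₁ ⊕ V₂) :=
  G₁.map Function.Embedding.inl ⊔ G₂.map Function.Embedding.inr
    ⊔ SimpleGraph.fromEdgeSet {s(Sum.inl v₁, Sum.inr v₂)}

/-- The graph obtained from `G` by attaching a new leaf (the vertex `none`) to `u`. -/
def attachLeaf {V : Type*} (G : SimpleGraph V) (u : V) : SimpleGraph (Option V) :=
  G.map Function.Embedding.some ⊔ SimpleGraph.fromEdgeSet {s(some u, (none : Option V))}

/-- The chain of `t` triangles (triangle `i` has vertices `inl i.castSucc`, `inl i.succ`,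
`inr (inl i)`), with a leaf `inr (inr ())` attached to the end vertex `inl 0`. -/
def triChain (t : ℕ) : SimpleGraph (Fin (t+1) ⊕ Fin t ⊕ Unit) :=
  SimpleGraph.fromRel (fun a b =>
    match a, b with
    | Sum.inl i, Sum.inl j => (i : ℕ) + 1 = (j : ℕ)
    | Sum.inr (Sum.inl i), Sum.inl j => j = Fin.castSucc i ∨ j = Fin.succ i
    | Sum.inr (Sum.inr _), Sum.inl j => j = 0
    | _, _ => False)

/-! Two vertices have local connectivity `0` exactly when they lie in different components, and
local connectivity inside a component agrees with that in `G`. Hence `W` resolves `G` iff it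
resolves every component and at most one vertex lies in a component missing `W`. A component with
two vertices meets every resolving set, so such a vertex is isolated: a minimum resolving set is a
basis of each nontrivial component together with all isolated vertices but one. -/

def InternallyDisjoint {V : Type*} {G : SimpleGraph V} {a b : V} (p q : G.Path a b) : Prop :=
  ∀ x, x ∈ p.1.support → x ∈ q.1.support → x = a ∨ x = b

lemma finsum_mem_le_finsum_mem {ι M : Type*} [AddCommMonoid M] [PartialOrder M]
    [IsOrderedAddMonoid M] {s : Set ι} (hs : s.Finite) {f g : ι → M} (h : ∀ i ∈ s, f i ≤ g i) :
    ∑ᶠ i ∈ s, f i ≤ ∑ᶠ i ∈ s, g i := by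
  rw [finsum_mem_eq_finite_toFinset_sum _ hs, finsum_mem_eq_finite_toFinset_sum _ hs]
  exact Finset.sum_le_sum fun i hi => h i (hs.mem_toFinset.1 hi)

section LocalConn

variable {V V' : Type*} {G : SimpleGraph V} {G' : SimpleGraph V'} {a b : V}

lemma localConn_self (a : V) : localConn G a a = ⊤ := if_pos rfl

lemma localConn_of_ne (hab : a ≠ b) : localConn G a b =
    sSup {n : ℕ∞ | ∃ Ps : Finset (G.Path a b),
      (Ps : Set (G.Path a b)).Pairwise InternallyDisjoint ∧ (Ps.card : ℕ∞) = n} :=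
  if_neg hab

lemma localConn_ne_top [Finite V] (hab : a ≠ b) : localConn G a b ≠ ⊤ := by
  classical
  have := Fintype.ofFinite V
  rw [localConn_of_ne hab]
  refine ne_top_of_le_ne_top (ENat.natCast_ne_top (Fintype.card (G.Path a b))) (sSup_le ?_)
  rintro n ⟨Ps, -, rfl⟩
  exact_mod_cast Ps.card_le_univ

lemma localConn_eq_zero_iff : localConn G a b = 0 ↔ ¬ G.Reachable a b := by
  classical
  rcases eq_or_ne a b with rfl | hab
  · simp [localConn_self]
  rw [localConn_of_ne hab]
  constructor
  · rintro h ⟨p⟩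
    have : (1 : ℕ∞) ≤ 0 := h ▸ le_sSup ⟨{p.toPath}, by simp, by simp⟩
    simp at this
  · intro hr
    have : IsEmpty (G.Path a b) := ⟨fun p => hr ⟨p.1⟩⟩
    refine le_antisymm (sSup_le ?_) bot_le
    rintro n ⟨Ps, -, rfl⟩
    simp [Finset.eq_empty_of_isEmpty Ps]

lemma localConn_le_of_injective {a' b' : V'} (hab : a ≠ b)
    (φ : G.Path a b → G'.Path a' b') (hφ : φ.Injective)
    (hdisj : ∀ p q, InternallyDisjoint p q → InternallyDisjoint (φ p) (φ q)) :
    localConn G a b ≤ localConn G' a' b' := by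
  rcases eq_or_ne a' b' with rfl | hab'
  · simp [localConn_self]
  rw [localConn_of_ne hab, localConn_of_ne hab']
  refine sSup_le fun n ⟨Ps, hPs, hn⟩ => le_sSup ⟨Ps.map ⟨φ, hφ⟩, ?_, by simpa using hn⟩
  rw [Finset.coe_map]
  exact hφ.injOn.pairwise_image.2 (hPs.imp hdisj)

lemma localConn_le_map (f : G ↪g G') (a b : V) : localConn G a b ≤ localConn G' (f a) (f b) := by
  rcases eq_or_ne a b with rfl | hab
  · simp [localConn_self]
  refine localConn_le_of_injective hab (Path.mapEmbedding f) (Path.mapEmbedding_injective f a b) ?_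
  intro p q hpq x hxp hxq
  simp only [Path.mapEmbedding_coe, Walk.support_map, List.mem_map] at hxp hxq
  obtain ⟨y, hy, rfl⟩ := hxp
  obtain ⟨z, hz, hzy⟩ := hxq
  obtain rfl := f.injective hzy
  exact (hpq z hy hz).imp (congrArg f) (congrArg f)

lemma mem_supp_of_mem_walk_support {c : G.ConnectedComponent} {u w x : V} (hu : u ∈ c.supp)
    (p : G.Walk u w) (hx : x ∈ p.support) : x ∈ c.supp := by
  classical
  rw [ConnectedComponent.mem_supp_iff] at hu ⊢
  exact hu ▸ (ConnectedComponent.sound ⟨p.takeUntil x hx⟩).symm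

lemma localConn_induce_supp (c : G.ConnectedComponent) (x y : c.supp) :
    localConn (G.induce c.supp) x y = localConn G x y := by
  refine le_antisymm (localConn_le_map (Embedding.induce c.supp) x y) ?_
  obtain ⟨u, hu⟩ := x
  obtain ⟨w, hw⟩ := y
  rcases eq_or_ne u w with rfl | huw
  · simp [localConn_self]
  have hs (p : G.Path u w) : ∀ x ∈ p.1.support, x ∈ c.supp :=
    fun _ => mem_supp_of_mem_walk_support hu p.1
  let lift (p : G.Path u w) : (G.induce c.supp).Path ⟨u, hu⟩ ⟨w, hw⟩ :=
    ⟨p.1.induce c.supp (hs p), .of_map (f := (Embedding.induce c.supp).toHom)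
      (by rw [Walk.map_induce]; exact p.2)⟩
  have hlift (p : G.Path u w) : (lift p).1.map (Embedding.induce c.supp).toHom = p.1 :=
    Walk.map_induce _ _
  refine localConn_le_of_injective huw lift (fun p q h => ?_) fun p q hpq x hxp hxq => ?_
  · exact Subtype.ext ((hlift p).symm.trans (h ▸ hlift q))
  · simp only [lift, Walk.support_induce, List.mem_attachWith] at hxp hxq
    exact (hpq x hxp hxq).imp Subtype.ext Subtype.ext

end LocalConn

section Resolving

variable {V : Type*} {G : SimpleGraph V} {W W' : Set V}

lemma ConnResolving.mono (hW : ConnResolving G W) (h : W ⊆ W') : ConnResolving G W' :=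
  fun u v huv => hW u v fun w hw => huv w (h hw)

lemma connResolving_of_subsingleton [Subsingleton V] (W : Set V) : ConnResolving G W :=
  fun u v _ => Subsingleton.elim u v

lemma ConnResolving.nonempty [Nontrivial V] (hW : ConnResolving G W) : W.Nonempty := by
  obtain ⟨u, v, huv⟩ := exists_pair_ne V
  by_contra h
  rw [Set.not_nonempty_iff_eq_empty] at h
  exact huv (hW u v (by simp [h]))

lemma connResolving_univ [Finite V] : ConnResolving G Set.univ := by
  intro u v h
  by_contra huv
  exact localConn_ne_top huv ((h v trivial).trans (localConn_self v))

lemma cdim_le_ncard (hW : ConnResolving G W) : cdim G ≤ W.ncard :=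
  Nat.sInf_le ⟨W, hW, rfl⟩

lemma exists_connResolving_ncard_eq_cdim [Finite V] :
    ∃ W : Set V, ConnResolving G W ∧ W.ncard = cdim G :=
  Nat.sInf_mem (s := {n | ∃ W : Set V, ConnResolving G W ∧ W.ncard = n})
    ⟨_, Set.univ, connResolving_univ, rfl⟩

lemma not_reachable_of_mem_supp_of_notMem_supp {c : G.ConnectedComponent} {u w : V}
    (hu : u ∈ c.supp) (hw : w ∉ c.supp) : ¬ G.Reachable u w := by
  intro h
  rw [ConnectedComponent.mem_supp_iff] at hu hw
  exact hw (ConnectedComponent.sound h.symm ▸ hu)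

theorem connResolving_iff : ConnResolving G W ↔
    (∀ c : G.ConnectedComponent, ConnResolving (G.induce c.supp) (Subtype.val ⁻¹' W)) ∧
      {v | ∀ w ∈ W, ¬ G.Reachable v w}.Subsingleton := by
  constructor
  · intro hW
    refine ⟨fun c x y hxy => Subtype.ext (hW x y fun w hw => ?_), fun u hu v hv => ?_⟩
    · by_cases hwc : w ∈ c.supp
      · simpa only [localConn_induce_supp] using hxy ⟨w, hwc⟩ hw
      · rw [localConn_eq_zero_iff.2 (not_reachable_of_mem_supp_of_notMem_supp x.2 hwc),
          localConn_eq_zero_iff.2 (not_reachable_of_mem_supp_of_notMem_supp y.2 hwc)]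
    · exact hW u v fun w hw => by
        rw [localConn_eq_zero_iff.2 (hu w hw), localConn_eq_zero_iff.2 (hv w hw)]
  · rintro ⟨hcomp, hsub⟩ u v huv
    by_cases hreach : ∃ w ∈ W, G.Reachable u w
    · obtain ⟨w, hw, huw⟩ := hreach
      have hvw : G.Reachable v w := by
        by_contra h
        rw [← localConn_eq_zero_iff, ← huv w hw, localConn_eq_zero_iff] at h
        exact h huw
      have hu : u ∈ (G.connectedComponentMk w).supp := ConnectedComponent.sound huw
      have hv : v ∈ (G.connectedComponentMk w).supp := ConnectedComponent.sound hvw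
      refine congrArg Subtype.val (hcomp _ ⟨u, hu⟩ ⟨v, hv⟩ fun w' hw' => ?_)
      simpa only [localConn_induce_supp] using huv w' hw'
    · have hu : ∀ w ∈ W, ¬ G.Reachable u w := fun w hw h => hreach ⟨w, hw, h⟩
      refine hsub hu fun w hw => ?_
      rw [← localConn_eq_zero_iff, ← huv w hw, localConn_eq_zero_iff]
      exact hu w hw

end Resolving

section Components

variable {V : Type*} {G : SimpleGraph V}

def isolatedVerts (G : SimpleGraph V) : Set V :=
  {v | (G.connectedComponentMk v).supp.ncard = 1}

lemma eq_of_mem_isolatedVerts_of_reachable {v w : V} (hv : v ∈ isolatedVerts G)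
    (h : G.Reachable v w) : w = v := by
  obtain ⟨a, ha⟩ := Set.ncard_eq_one.1 hv
  have hv' : v ∈ (G.connectedComponentMk v).supp := rfl
  have hw' : w ∈ (G.connectedComponentMk v).supp := ConnectedComponent.sound h.symm
  rw [ha] at hv' hw'
  exact hw'.trans hv'.symm

lemma mem_isolatedVerts_of_ncard_le_one [Finite V] {v : V}
    (h : (G.connectedComponentMk v).supp.ncard ≤ 1) : v ∈ isolatedVerts G :=
  le_antisymm h ((Set.ncard_pos (Set.toFinite _)).2 ⟨v, rfl⟩)

lemma disjoint_isolatedVerts_supp {c : G.ConnectedComponent} (hc : 2 ≤ c.supp.ncard) :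
    Disjoint (isolatedVerts G) c.supp := by
  refine Set.disjoint_left.2 fun v hv hvc => ?_
  have : c.supp.ncard = 1 := hvc ▸ hv
  omega

lemma ncard_isolatedVerts :
    (isolatedVerts G).ncard = Nat.card {c : G.ConnectedComponent // c.supp.ncard = 1} := by
  rw [← Nat.card_coe_set_eq]
  refine Nat.card_eq_of_bijective (fun v => ⟨G.connectedComponentMk v, v.2⟩) ⟨?_, ?_⟩
  · rintro ⟨u, hu⟩ ⟨v, hv⟩ h
    exact Subtype.ext (eq_of_mem_isolatedVerts_of_reachable hu
      (ConnectedComponent.exact (congrArg Subtype.val h))).symm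
  · rintro ⟨c, hc⟩
    obtain ⟨a, ha⟩ := Set.ncard_eq_one.1 hc
    have hac : a ∈ c.supp := ha ▸ Set.mem_singleton a
    exact ⟨⟨a, show (G.connectedComponentMk a).supp.ncard = 1 from hac ▸ hc⟩, Subtype.ext hac⟩

variable [Finite V]

lemma ncard_isolatedVerts_sub_one_add_finsum_cdim_le {W : Set V} (hW : ConnResolving G W) :
    (isolatedVerts G).ncard - 1 + ∑ᶠ c ∈ {c : G.ConnectedComponent | 2 ≤ c.supp.ncard},
      cdim (G.induce c.supp) ≤ W.ncard := by
  obtain ⟨hcomp, hsub⟩ := connResolving_iff.1 hW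
  set I := isolatedVerts G
  set Big := {c : G.ConnectedComponent | 2 ≤ c.supp.ncard}
  have hI : I.ncard - 1 ≤ (I ∩ W).ncard := by
    have : (I \ W).ncard ≤ 1 := Set.ncard_le_one_iff_subsingleton.2 <| hsub.anti
      fun v hv w hw h => hv.2 (eq_of_mem_isolatedVerts_of_reachable hv.1 h ▸ hw)
    have := Set.ncard_inter_add_ncard_sdiff_eq_ncard I W
    omega
  have hc (c : G.ConnectedComponent) : cdim (G.induce c.supp) ≤ (c.supp ∩ W).ncard := by
    rw [← Subtype.image_preimage_coe, Set.ncard_image_of_injective _ Subtype.val_injective]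
    exact cdim_le_ncard (hcomp c)
  have hdisj : Disjoint (I ∩ W) (⋃ c ∈ Big, c.supp ∩ W) :=
    Set.disjoint_iUnion₂_right.2 fun c hc =>
      (disjoint_isolatedVerts_supp hc).mono Set.inter_subset_left Set.inter_subset_left
  calc I.ncard - 1 + ∑ᶠ c ∈ Big, cdim (G.induce c.supp)
      ≤ (I ∩ W).ncard + ∑ᶠ c ∈ Big, (c.supp ∩ W).ncard :=
        add_le_add hI (finsum_mem_le_finsum_mem (Set.toFinite _) fun c _ => hc c)
    _ = ((I ∩ W) ∪ ⋃ c ∈ Big, c.supp ∩ W).ncard := by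
        rw [Set.ncard_union_eq hdisj, (Set.toFinite Big).ncard_biUnion (fun _ _ => Set.toFinite _)
          fun c _ d _ hcd => (G.pairwise_disjoint_supp_connectedComponent hcd).mono
            Set.inter_subset_left Set.inter_subset_left]
    _ ≤ W.ncard := Set.ncard_le_ncard
        (Set.union_subset Set.inter_subset_right (Set.iUnion₂_subset fun _ _ => Set.inter_subset_right))

lemma exists_connResolving_ncard_le : ∃ W : Set V, ConnResolving G W ∧
    W.ncard ≤ (isolatedVerts G).ncard - 1 + ∑ᶠ c ∈ {c : G.ConnectedComponent | 2 ≤ c.supp.ncard},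
      cdim (G.induce c.supp) := by
  set I := isolatedVerts G
  set Big := {c : G.ConnectedComponent | 2 ≤ c.supp.ncard}
  obtain ⟨S, hSI, hScard⟩ := Set.exists_subset_card_eq (s := I) (n := I.ncard - 1) (Nat.sub_le _ _)
  choose B hB hBcard using fun c : G.ConnectedComponent =>
    exists_connResolving_ncard_eq_cdim (G := G.induce c.supp)
  refine ⟨S ∪ ⋃ c ∈ Big, Subtype.val '' B c, connResolving_iff.2 ⟨fun c => ?_, ?_⟩, ?_⟩
  · by_cases hc : c ∈ Big
    · exact (hB c).mono fun x hx => Or.inr (Set.mem_biUnion hc ⟨x, hx, rfl⟩)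
    · have : Subsingleton c.supp := (Set.subsingleton_coe _).2 <|
        Set.ncard_le_one_iff_subsingleton.1 (by simp only [Big, Set.mem_ofPred_eq] at hc; omega)
      exact connResolving_of_subsingleton _
  · have hIS : (I \ S).Subsingleton :=
      Set.ncard_le_one_iff_subsingleton.1 (by rw [Set.ncard_sdiff hSI]; omega)
    refine hIS.anti fun v hv => ⟨?_, fun hvS => hv v (Or.inl hvS) .rfl⟩
    refine mem_isolatedVerts_of_ncard_le_one (not_lt.1 fun hbig => ?_)
    have : Nontrivial (G.connectedComponentMk v).supp :=
      Set.nontrivial_coe_sort.2 (Set.one_lt_ncard_iff_nontrivial.1 hbig)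
    obtain ⟨b, hb⟩ := (hB (G.connectedComponentMk v)).nonempty
    exact hv b (Or.inr (Set.mem_biUnion hbig ⟨b, hb, rfl⟩)) (ConnectedComponent.exact b.2.symm)
  · calc _ ≤ S.ncard + (⋃ c ∈ Big, Subtype.val '' B c).ncard := Set.ncard_union_le _ _
      _ ≤ S.ncard + ∑ᶠ c ∈ Big, (Subtype.val '' B c).ncard :=
        Nat.add_le_add_left ((Set.toFinite Big).ncard_biUnion_le _) _
      _ = _ := by
        rw [hScard]
        congr 1
        exact finsum_mem_congr rfl fun c _ => by
          rw [Set.ncard_image_of_injective _ Subtype.val_injective, hBcard]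

end Components

/-- the connectivity dimension of a graph is `max (i-1) 0` (where `i` is the
number of isolated-vertex components) plus the sum of the connectivity dimensions of the
components with at least two vertices. -/
theorem stmt0 {V : Type*} [Fintype V] (G : SimpleGraph V) :
    cdim G = max (Nat.card {c : G.ConnectedComponent // c.supp.ncard = 1} - 1) 0
      + ∑ᶠ c ∈ {c : G.ConnectedComponent | 2 ≤ c.supp.ncard},
          cdim (G.induce c.supp) := by
  rw [Nat.max_zero, ← ncard_isolatedVerts]
  obtain ⟨W, hW, hWcard⟩ := exists_connResolving_ncard_eq_cdim (G := G)
  obtain ⟨W', hW', hW'card⟩ := exists_connResolving_ncard_le (G := G)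
  exact le_antisymm ((cdim_le_ncard hW').trans hW'card)
    (hWcard ▸ ncard_isolatedVerts_sub_one_add_finsum_cdim_le hW)

end ConnDim
end

section
/- If two vertices v_1 and v_2 of a finite simple graph G are twins (they have the same neighborhood in G minus {v_1, v_2}), then κ(v_1, w) = κ(v_2, w) for every vertex w ∉ {v_1, v_2}; consequently, every connectivity resolving set of G contains at least one of v_1 and v_2. -/
open SimpleGraph

namespace ConnDim

open Classical in
lemma localConn_map {V : Type*} (G : SimpleGraph V) (φ : G ≃g G) (a b : V) :
    localConn G a b ≤ localConn G (φ a) (φ b) := by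
  by_cases hab : a = b
  · subst hab; simp [localConn]
  have hab' : φ a ≠ φ b := fun h => hab (φ.injective h)
  rw [localConn, localConn, if_neg hab, if_neg hab']
  apply sSup_le_sSup
  rintro n ⟨Ps, hdisj, hcard⟩
  classical
  have hinj : Function.Injective (φ : V → V) := φ.injective
  refine ⟨Ps.image (fun p => p.map φ.toHom hinj), ?_, ?_⟩
  · intro p hp q hq hpq x hxp hxq
    simp only [Finset.mem_image] at hp hq
    obtain ⟨p₀, hp₀, rfl⟩ := hp
    obtain ⟨q₀, hq₀, rfl⟩ := hq
    have hne : p₀ ≠ q₀ := by rintro rfl; exact hpq rfl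
    simp only [SimpleGraph.Path.map, SimpleGraph.Walk.support_map, List.mem_map] at hxp hxq
    obtain ⟨y, hy, rfl⟩ := hxp
    obtain ⟨z, hz, hz'⟩ := hxq
    have : z = y := hinj hz'
    subst this
    rcases hdisj p₀ hp₀ q₀ hq₀ hne z hy hz with h | h <;> subst h
    · left; rfl
    · right; rfl
  · rw [Finset.card_image_of_injective _ ?_, hcard]
    intro p q h
    apply Subtype.ext
    exact SimpleGraph.Walk.map_injective_of_injective hinj _ _ (congrArg Subtype.val h)

lemma localConn_iso {V : Type*} (G : SimpleGraph V) (φ : G ≃g G) (a b : V) :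
    localConn G (φ a) (φ b) = localConn G a b := by
  refine le_antisymm ?_ (localConn_map G φ a b)
  have := localConn_map G φ.symm (φ a) (φ b)
  simpa using this

/-- twins have equal local connectivity to every third vertex, and every
connectivity resolving set contains at least one vertex of each pair of twins. -/
theorem stmt5 {V : Type*} [Fintype V] (G : SimpleGraph V) (v₁ v₂ : V) (hne : v₁ ≠ v₂)
    (htw : AreTwins G v₁ v₂) :
    (∀ w : V, w ≠ v₁ → w ≠ v₂ → localConn G v₁ w = localConn G v₂ w) ∧
    (∀ W : Set V, ConnResolving G W → v₁ ∈ W ∨ v₂ ∈ W) := by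
  classical
  have hkey : ∀ x y, G.Adj x y → G.Adj (Equiv.swap v₁ v₂ x) (Equiv.swap v₁ v₂ y) := by
    intro x y hxy
    by_cases hx1 : x = v₁
    · rw [hx1] at hxy ⊢
      by_cases hy1 : y = v₁
      · exact absurd hy1.symm (G.ne_of_adj hxy)
      · by_cases hy2 : y = v₂
        · rw [hy2] at hxy ⊢; simpa using hxy.symm
        · rw [Equiv.swap_apply_left, Equiv.swap_apply_of_ne_of_ne hy1 hy2]
          exact (htw y hy1 hy2).mp hxy
    · by_cases hx2 : x = v₂
      · rw [hx2] at hxy ⊢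
        by_cases hy1 : y = v₁
        · rw [hy1] at hxy ⊢; simpa using hxy.symm
        · by_cases hy2 : y = v₂
          · exact absurd hy2.symm (G.ne_of_adj hxy)
          · rw [Equiv.swap_apply_right, Equiv.swap_apply_of_ne_of_ne hy1 hy2]
            exact (htw y hy1 hy2).mpr hxy
      · by_cases hy1 : y = v₁
        · rw [hy1] at hxy ⊢
          rw [Equiv.swap_apply_left, Equiv.swap_apply_of_ne_of_ne hx1 hx2]
          exact ((htw x hx1 hx2).mp hxy.symm).symm
        · by_cases hy2 : y = v₂
          · rw [hy2] at hxy ⊢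
            rw [Equiv.swap_apply_right, Equiv.swap_apply_of_ne_of_ne hx1 hx2]
            exact ((htw x hx1 hx2).mpr hxy.symm).symm
          · rw [Equiv.swap_apply_of_ne_of_ne hx1 hx2,
              Equiv.swap_apply_of_ne_of_ne hy1 hy2]
            exact hxy
  let φ : G ≃g G :=
    { toEquiv := Equiv.swap v₁ v₂
      map_rel_iff' := by
        intro x y
        constructor
        · intro h
          have := hkey _ _ h
          simpa using this
        · exact hkey x y }
  have key : ∀ w : V, w ≠ v₁ → w ≠ v₂ → localConn G v₁ w = localConn G v₂ w := by
    intro w hw1 hw2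
    have h := localConn_iso G φ v₁ w
    have h1 : φ v₁ = v₂ := Equiv.swap_apply_left v₁ v₂
    have h2 : φ w = w := Equiv.swap_apply_of_ne_of_ne hw1 hw2
    rw [h1, h2] at h
    exact h.symm
  refine ⟨key, ?_⟩
  intro W hW
  by_contra h
  push_neg at h
  exact hne (hW v₁ v₂ (fun w hw => key w (fun e => h.1 (e ▸ hw)) (fun e => h.2 (e ▸ hw))))

end ConnDim
end
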